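/- If C ⊆ S(n,2) is a W-light code, i.e., some orientation of the Johnson graph J(n,2) gives every vertex of C outdegree at most W, then |C| ≤ ⌊(W+1)n/2⌋. -/

import Mathlib

def weight {n : ℕ} (B : Fin n → Bool) : ℕ :=
  (Finset.univ.filter (fun i => B i = true)).card

def hamming {n : ℕ} (B B' : Fin n → Bool) : ℕ :=
  (Finset.univ.filter (fun i => B i ≠ B' i)).card

theorem hamming_comm {n : ℕ} (B B' : Fin n → Bool) : hamming B B' = hamming B' B := by
  unfold hamming; congr 1; ext i; simp [ne_comm]

def johnson (n w : ℕ) : SimpleGraph {B : Fin n → Bool // weight B = w} where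
  Adj B B' := hamming B.1 B'.1 = 2
  symm := ⟨fun B B' (h : hamming B.1 B'.1 = 2) => show hamming B'.1 B.1 = 2 by rwa [hamming_comm]⟩
  loopless := ⟨fun B (h : hamming B.1 B.1 = 2) => by simp [hamming] at h⟩

structure GraphOrientation {V : Type*} (G : SimpleGraph V) where
  dir : V → V → Prop
  dir_adj : ∀ u v, dir u v → G.Adj u v
  total : ∀ u v, G.Adj u v → dir u v ∨ dir v u
  asymm : ∀ u v, dir u v → ¬ dir v u

noncomputable def outdeg {V : Type*} {G : SimpleGraph V} (Λ : GraphOrientation G) (v : V) : ℕ :=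
  {u | Λ.dir v u}.ncard

noncomputable def Lmax (W n w : ℕ) : ℕ :=
  sSup {k | ∃ Λ : GraphOrientation (johnson n w), k = {B | outdeg Λ B ≤ W}.ncard}

/-!
Let `ψ i` count the words of `C` with a one at coordinate `i`, so `∑ ψ i = 2 |C|`. Two distinct
words of weight two share at most one coordinate, and are adjacent in `J(n,2)` when they share one;
hence `∑ ψ i (ψ i - 1)` counts ordered adjacent pairs inside `C`, which is at most twice the number
of arcs leaving `C`, i.e. at most `2 W |C|`. Cauchy–Schwarz then gives
`4 |C|² ≤ n ∑ ψ i ² ≤ n (2 W + 2) |C|`.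
-/

open Finset

namespace GraphOrientation

variable {V : Type*} {G : SimpleGraph V} (Λ : GraphOrientation G)

theorem card_filter_dir_le_outdeg [Finite V] (s : Finset V) (v : V) [DecidablePred (Λ.dir v)] :
    #(s.filter (Λ.dir v)) ≤ outdeg Λ v := by
  rw [← Set.ncard_coe_finset]
  exact Set.ncard_le_ncard (fun u hu => (mem_filter.1 hu).2)

theorem card_adj_pairs_le_two_mul_sum_outdeg [Finite V] [DecidableRel G.Adj] (s : Finset V) :
    #((s ×ˢ s).filter (fun p => G.Adj p.1 p.2)) ≤ 2 * ∑ v ∈ s, outdeg Λ v := by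
  classical
  set D := (s ×ˢ s).filter (fun p => Λ.dir p.1 p.2)
  have hD : #D ≤ ∑ v ∈ s, outdeg Λ v := by
    rw [card_filter, sum_product]
    refine sum_le_sum fun v _ => ?_
    rw [← card_filter]
    exact Λ.card_filter_dir_le_outdeg s v
  calc #((s ×ˢ s).filter (fun p => G.Adj p.1 p.2))
      ≤ #(D ∪ D.image Prod.swap) := by
        refine card_le_card fun p hp => ?_
        obtain ⟨⟨hu, hv⟩, hadj⟩ := by simpa only [mem_filter, mem_product] using hp
        rcases Λ.total _ _ hadj with hd | hd
        · exact mem_union_left _ (by simp [D, hu, hv, hd])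
        · exact mem_union_right _ (mem_image.2 ⟨p.swap, by simp [D, hu, hv, hd], rfl⟩)
    _ ≤ #D + #D := (card_union_le _ _).trans (Nat.add_le_add_left card_image_le _)
    _ ≤ 2 * ∑ v ∈ s, outdeg Λ v := by omega

end GraphOrientation

section BinaryWords

variable {n : ℕ}

def wordSupport (B : Fin n → Bool) : Finset (Fin n) :=
  univ.filter (fun i => B i = true)

theorem weight_eq_card_wordSupport (B : Fin n → Bool) : weight B = #(wordSupport B) := rfl

theorem wordSupport_injective : Function.Injective (wordSupport (n := n)) := by
  intro B B' h
  funext i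
  have hi := congrArg (i ∈ ·) h
  simp only [wordSupport, mem_filter, mem_univ, true_and, eq_iff_iff] at hi
  cases hB : B i <;> cases hB' : B' i <;> simp_all

theorem hamming_add_two_mul_card_inter (B B' : Fin n → Bool) :
    hamming B B' + 2 * #(wordSupport B ∩ wordSupport B') = weight B + weight B' := by
  simp only [hamming, weight, wordSupport, ← filter_and, card_filter, mul_sum, ← sum_add_distrib]
  refine sum_congr rfl fun i _ => ?_
  cases B i <;> cases B' i <;> rfl

theorem card_inter_wordSupport_le_one {B B' : Fin n → Bool} (hB : weight B = 2)
    (hB' : weight B' = 2) (hne : B ≠ B') : #(wordSupport B ∩ wordSupport B') ≤ 1 := by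
  by_contra! h
  have hleft : wordSupport B ∩ wordSupport B' = wordSupport B :=
    eq_of_subset_of_card_le inter_subset_left (by rw [← weight_eq_card_wordSupport]; omega)
  have hright : wordSupport B ∩ wordSupport B' = wordSupport B' :=
    eq_of_subset_of_card_le inter_subset_right (by rw [← weight_eq_card_wordSupport]; omega)
  exact hne (wordSupport_injective (hleft.symm.trans hright))

theorem johnson_two_adj_of_eq_true {B B' : {B : Fin n → Bool // weight B = 2}} (hne : B ≠ B')
    {i : Fin n} (hi : B.1 i = true) (hi' : B'.1 i = true) : (johnson n 2).Adj B B' := by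
  have hmem : i ∈ wordSupport B.1 ∩ wordSupport B'.1 := by simp [wordSupport, hi, hi']
  have hle := card_inter_wordSupport_le_one B.2 B'.2 (fun h => hne (Subtype.ext h))
  have hsum := hamming_add_two_mul_card_inter B.1 B'.1
  have hpos := card_pos.2 ⟨i, hmem⟩
  show hamming B.1 B'.1 = 2
  omega

end BinaryWords

section Counting

variable {n : ℕ} (s : Finset {B : Fin n → Bool // weight B = 2})

def coordCount (i : Fin n) : ℕ := #(s.filter (fun B => B.1 i = true))

theorem sum_coordCount : ∑ i, coordCount s i = 2 * #s := by
  simp only [coordCount, card_filter]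
  rw [sum_comm, mul_comm, ← smul_eq_mul, ← sum_const]
  refine sum_congr rfl fun B _ => ?_
  rw [← card_filter]
  exact B.2

theorem sum_card_offDiag_le_card_adj_pairs [DecidableRel (johnson n 2).Adj] :
    ∑ i, #((s.filter (fun B => B.1 i = true)).offDiag) ≤
      #((s ×ˢ s).filter (fun p => (johnson n 2).Adj p.1 p.2)) := by
  rw [← card_biUnion]
  · refine card_le_card fun p hp => ?_
    obtain ⟨i, -, ⟨hp1, hi1⟩, ⟨hp2, hi2⟩, hne⟩ := by
      simpa only [mem_biUnion, mem_offDiag, mem_filter] using hp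
    exact mem_filter.2 ⟨mem_product.2 ⟨hp1, hp2⟩, johnson_two_adj_of_eq_true hne hi1 hi2⟩
  · intro i _ j _ hij
    refine disjoint_left.2 fun p hpi hpj => ?_
    obtain ⟨⟨-, hi1⟩, ⟨-, hi2⟩, hne⟩ := by simpa only [mem_offDiag, mem_filter] using hpi
    obtain ⟨⟨-, hj1⟩, ⟨-, hj2⟩, -⟩ := by simpa only [mem_offDiag, mem_filter] using hpj
    have hle := card_inter_wordSupport_le_one p.1.2 p.2.2 (fun h => hne (Subtype.ext h))
    exact hij <| card_le_one.1 hle i (by simp [wordSupport, hi1, hi2]) j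
      (by simp [wordSupport, hj1, hj2])

theorem sum_coordCount_sq_le [DecidableRel (johnson n 2).Adj] :
    ∑ i, coordCount s i ^ 2 ≤
      #((s ×ˢ s).filter (fun p => (johnson n 2).Adj p.1 p.2)) + 2 * #s := by
  have hsq : ∀ i, coordCount s i ^ 2 =
      #((s.filter (fun B => B.1 i = true)).offDiag) + coordCount s i := fun i => by
    rw [offDiag_card, coordCount, sq, Nat.sub_add_cancel (Nat.le_mul_self _)]
  rw [sum_congr rfl fun i _ => hsq i, sum_add_distrib, sum_coordCount]
  exact Nat.add_le_add_right (sum_card_offDiag_le_card_adj_pairs s) _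

theorem two_mul_card_le_of_outdeg_le (W : ℕ) (Λ : GraphOrientation (johnson n 2))
    (hΛ : ∀ B ∈ s, outdeg Λ B ≤ W) : 2 * #s ≤ (W + 1) * n := by
  classical
  have hadj := Λ.card_adj_pairs_le_two_mul_sum_outdeg s
  have hout : ∑ B ∈ s, outdeg Λ B ≤ W * #s := by
    simpa [mul_comm] using sum_le_sum hΛ
  have hCS : (2 * #s) ^ 2 ≤ n * ∑ i, coordCount s i ^ 2 := by
    simpa [sum_coordCount] using sq_sum_le_card_mul_sum_sq (s := univ) (f := coordCount s)
  have hsq := sum_coordCount_sq_le s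
  rcases Nat.eq_zero_or_pos #s with hs | hs
  · simp [hs]
  refine Nat.le_of_mul_le_mul_right (?_ : 2 * #s * (2 * #s) ≤ (W + 1) * n * (2 * #s)) (by omega)
  calc 2 * #s * (2 * #s) = (2 * #s) ^ 2 := (sq _).symm
    _ ≤ n * (2 * (W * #s) + 2 * #s) := hCS.trans (Nat.mul_le_mul_left n (by omega))
    _ = (W + 1) * n * (2 * #s) := by ring

end Counting

theorem stmt9 (W n : ℕ) (C : Set {B : Fin n → Bool // weight B = 2})
    (h : ∃ Λ : GraphOrientation (johnson n 2), ∀ B ∈ C, outdeg Λ B ≤ W) :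
    C.ncard ≤ (W + 1) * n / 2 := by
  classical
  obtain ⟨Λ, hΛ⟩ := h
  rw [Set.ncard_eq_toFinset_card', Nat.le_div_iff_mul_le two_pos, mul_comm]
  exact two_mul_card_le_of_outdeg_le _ W Λ fun B hB => hΛ B (Set.mem_toFinset.1 hB)
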